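/- The Lebesgue measure restricted to the unit interval [0,1] (i.e., the measure with constant density ρ⁽⁰⁾(x) = 1 on [0,1]) is invariant under the map φ₀; that is, the pushforward of this measure under φ₀ equals the measure itself. -/

import Mathlib

open MeasureTheory

/-- The infinitely piecewise linear map `φ_k` on `[0,1]`:
`φ_k(x) = 2^(1-k) (x - 1/2)` for `x ∈ [1/2, 1]`,
`φ_k(x) = 2^i (x - 2^(-i))` for `x ∈ [2^(-i), 2^(1-i))`, `i ≥ 2`, and `φ_k(0) = 0`.
For `0 < x < 1/2`, the index `i` is recovered as `i = -(Int.log 2 x)`. -/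
noncomputable def phi (k : ℕ) (x : ℝ) : ℝ :=
  if x = 0 then 0
  else if (1 : ℝ) / 2 ≤ x then (2 : ℝ) ^ ((1 : ℤ) - k) * (x - 1 / 2)
  else (2 : ℝ) ^ (-(Int.log 2 x)) * (x - (2 : ℝ) ^ (Int.log 2 x))

/-! On `[2^(-n-1), 2^(-n))` the map `φ₀` is the affine bijection `x ↦ 2^(n+1) x - 1` onto
`[0, 1)`, so it pushes Lebesgue measure on that interval forward to `2^(-(n+1))` times Lebesgue
measure on `[0, 1)`. These intervals partition `(0, 1)` and the weights sum to `1`. -/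

open Set
open scoped ENNReal Function

theorem Int.log_eq_of_mem_Ico {R : Type*} [Semifield R] [LinearOrder R] [IsStrictOrderedRing R]
    [FloorSemiring R] {b : ℕ} (hb : 1 < b) {z : ℤ} {r : R}
    (h : r ∈ Ico ((b : R) ^ z) ((b : R) ^ (z + 1))) : Int.log b r = z := by
  have hr : 0 < r := (zpow_pos (by exact_mod_cast zero_lt_one.trans hb) z).trans_le h.1
  have hle := (Int.zpow_le_iff_le_log hb hr).1 h.1
  have hlt := (Int.lt_zpow_iff_log_lt hb hr).1 h.2
  omega

theorem MeasureTheory.Measure.sum_smul_const {α ι : Type*} [MeasurableSpace α] (c : ι → ℝ≥0∞)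
    (μ : Measure α) : Measure.sum (fun i => c i • μ) = (∑' i, c i) • μ := by
  ext s hs
  simp only [Measure.sum_apply _ hs, Measure.smul_apply, smul_eq_mul, ENNReal.tsum_mul_right]

theorem ENNReal.tsum_inv_two_pow_succ : ∑' n : ℕ, ((2 : ℝ≥0∞) ^ (n + 1))⁻¹ = 1 := by
  simp_rw [ENNReal.inv_pow, ENNReal.tsum_geometric_add_one, ENNReal.one_sub_inv_two, inv_inv]
  exact ENNReal.inv_mul_cancel two_ne_zero ENNReal.ofNat_ne_top

theorem Real.map_volume_restrict_preimage_mul_sub {a : ℝ} (ha : 0 < a) (b : ℝ) {s : Set ℝ}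
    (hs : MeasurableSet s) :
    Measure.map (fun x => a * x - b) (volume.restrict ((fun x => a * x - b) ⁻¹' s)) =
      ENNReal.ofReal a⁻¹ • volume.restrict s := by
  have hcomp : (fun x : ℝ => a * x - b) = (fun y => y + -b) ∘ (fun x => a * x) :=
    funext fun x => sub_eq_add_neg (a * x) b
  rw [← Measure.restrict_map ((measurable_const_mul a).sub_const b) hs, hcomp,
    ← Measure.map_map (measurable_add_const _) (measurable_const_mul a),
    Real.map_volume_mul_left ha.ne', Measure.map_smul, map_add_right_eq_self,
    abs_of_pos (inv_pos.2 ha), Measure.restrict_smul]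

theorem two_zpow_neg_sub_one (n : ℕ) : (2 : ℝ) ^ (-(n : ℤ) - 1) = 1 / 2 ^ (n + 1) := by
  rw [show -(n : ℤ) - 1 = -((n + 1 : ℕ) : ℤ) by push_cast; ring, zpow_neg, zpow_natCast, one_div]

-- The paper's interval `[2^(-i), 2^(1-i))`, with `i = n + 1`.
def dyadicIco (n : ℕ) : Set ℝ := Ico (2 ^ (-(n : ℤ) - 1)) (2 ^ (-(n : ℤ)))

theorem dyadicIco_eq_div (n : ℕ) : dyadicIco n = Ico (1 / 2 ^ (n + 1)) (2 / 2 ^ (n + 1)) := by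
  rw [dyadicIco, two_zpow_neg_sub_one, zpow_neg, zpow_natCast, pow_succ,
    div_mul_cancel_right₀ two_ne_zero]

theorem pairwise_disjoint_dyadicIco : Pairwise (Disjoint on dyadicIco) := by
  have hanti : Antitone fun n : ℕ => (2 : ℝ) ^ (-(n : ℤ)) := fun m n hmn =>
    zpow_le_zpow_right₀ one_le_two (by omega)
  convert hanti.pairwise_disjoint_on_Ico_succ using 3 with n
  simp [dyadicIco, sub_eq_add_neg, add_comm]

theorem iUnion_dyadicIco : ⋃ n, dyadicIco n = Ioo 0 1 := by
  ext x
  simp only [dyadicIco, mem_iUnion, mem_Ico, mem_Ioo]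
  constructor
  · rintro ⟨n, hlo, hhi⟩
    exact ⟨(zpow_pos two_pos _).trans_le hlo,
      hhi.trans_le (zpow_le_one_of_nonpos₀ one_le_two (by omega))⟩
  · rintro ⟨hx0, hx1⟩
    obtain ⟨z, hlo, hhi⟩ := exists_mem_Ico_zpow hx0 one_lt_two
    have hz : z < 0 := (zpow_lt_one_iff_right₀ one_lt_two).1 (hlo.trans_lt hx1)
    refine ⟨(-z - 1).toNat, ?_, ?_⟩
    · rwa [show -(((-z - 1).toNat : ℕ) : ℤ) - 1 = z by omega]
    · rwa [show -(((-z - 1).toNat : ℕ) : ℤ) = z + 1 by omega]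

theorem phi_zero_of_mem_dyadicIco {n : ℕ} {x : ℝ} (hx : x ∈ dyadicIco n) :
    phi 0 x = 2 ^ (n + 1) * x - 1 := by
  obtain ⟨hlo, hhi⟩ := hx
  have hx0 : 0 < x := (zpow_pos two_pos _).trans_le hlo
  rw [phi, if_neg hx0.ne']
  rcases Nat.eq_zero_or_pos n with rfl | hn
  · rw [if_pos (by simpa using hlo)]
    ring
  · have hhalf : ¬ 1 / 2 ≤ x := by
      refine not_le.2 (hhi.trans_le ?_)
      calc (2 : ℝ) ^ (-(n : ℤ)) ≤ 2 ^ (-1 : ℤ) := zpow_le_zpow_right₀ one_le_two (by omega)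
        _ = 1 / 2 := by norm_num
    have hlog : Int.log 2 x = -(n : ℤ) - 1 :=
      Int.log_eq_of_mem_Ico one_lt_two ⟨by exact_mod_cast hlo, by simpa using hhi⟩
    rw [if_neg hhalf, hlog, two_zpow_neg_sub_one,
      show -(-(n : ℤ) - 1) = ((n + 1 : ℕ) : ℤ) by push_cast; ring, zpow_natCast]
    field_simp

theorem phi_zero_ae_eq_restrict_dyadicIco (n : ℕ) :
    phi 0 =ᵐ[volume.restrict (dyadicIco n)] fun x => 2 ^ (n + 1) * x - 1 :=
  (ae_restrict_iff' measurableSet_Ico).2 (ae_of_all _ fun _ => phi_zero_of_mem_dyadicIco)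

theorem preimage_dyadicIco (n : ℕ) :
    (fun x : ℝ => 2 ^ (n + 1) * x - 1) ⁻¹' Ico 0 1 = dyadicIco n := by
  change (fun x : ℝ => 2 ^ (n + 1) * x) ⁻¹' ((fun y => y - 1) ⁻¹' Ico 0 1) = _
  rw [preimage_sub_const_Ico, preimage_const_mul_Ico₀ _ _ (by positivity), dyadicIco_eq_div]
  norm_num

theorem map_phi_zero_restrict_dyadicIco (n : ℕ) :
    Measure.map (phi 0) (volume.restrict (dyadicIco n)) =
      ((2 : ℝ≥0∞) ^ (n + 1))⁻¹ • volume.restrict (Ico 0 1) := by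
  rw [Measure.map_congr (phi_zero_ae_eq_restrict_dyadicIco n), ← preimage_dyadicIco,
    Real.map_volume_restrict_preimage_mul_sub (by positivity) _ measurableSet_Ico,
    ENNReal.ofReal_inv_of_pos (by positivity), ENNReal.ofReal_pow zero_le_two, ENNReal.ofReal_ofNat]

/-- The Lebesgue measure restricted to `[0,1]` (constant density `ρ⁰(x) = 1` on `[0,1]`)
is invariant under `φ₀`. -/
theorem stmt_0 :
    Measure.map (phi 0) (volume.restrict (Set.Icc (0 : ℝ) 1)) =
      volume.restrict (Set.Icc (0 : ℝ) 1) := by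
  have hmeas : AEMeasurable (phi 0) (Measure.sum fun n => volume.restrict (dyadicIco n)) :=
    aemeasurable_sum_measure_iff.2 fun n =>
      ((measurable_const_mul _).sub_const _).aemeasurable.congr
        (phi_zero_ae_eq_restrict_dyadicIco n).symm
  calc Measure.map (phi 0) (volume.restrict (Icc 0 1))
      = Measure.map (phi 0) (Measure.sum fun n => volume.restrict (dyadicIco n)) := by
        rw [← Measure.restrict_congr_set Ioo_ae_eq_Icc, ← iUnion_dyadicIco,
          Measure.restrict_iUnion pairwise_disjoint_dyadicIco fun _ => measurableSet_Ico]
    _ = Measure.sum fun n : ℕ => ((2 : ℝ≥0∞) ^ (n + 1))⁻¹ • volume.restrict (Ico (0 : ℝ) 1) := by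
        simp_rw [Measure.map_sum hmeas, map_phi_zero_restrict_dyadicIco]
    _ = volume.restrict (Icc 0 1) := by
        rw [Measure.sum_smul_const, ENNReal.tsum_inv_two_pow_succ, one_smul]
        exact Measure.restrict_congr_set Ico_ae_eq_Icc
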